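/- arXiv:2504.07020 — 5 statements merged into one kernel-verified Lean document; each statement's English description precedes it below -/
import Mathlib

section
/- There exists a computably enumerable equivalence relation R on the natural numbers with infinitely many equivalence classes (i.e., there is a function h : ℕ → ℕ such that ¬R (h i) (h j) whenever i ≠ j) such that every computable function f : ℕ → ℕ that is R-invariant (meaning R n m implies f n = f m) is constant. -/
/-!
Identify each odd number `2e + 1` with the output `φₑ(0)` of program `e` on input `0`, and let
`a ~ b` when iterating the partial map `2e + 1 ↦ φₑ(0)` from `a` and from `b` reaches a common
value. As the map is a partial function, `~` is an equivalence relation; it is c.e. since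
convergent iterates are witnessed at finite stages of the computation; and the even numbers,
where the map is undefined, lie in pairwise distinct classes. If `f` were computable,
`~`-invariant and `f n ≠ f 0`, the recursion theorem would give a program `e` with
`φₑ(0) = n` if `f (2e + 1) = f 0` and `φₑ(0) = 0` otherwise; either way `f` separates the
related points `2e + 1` and `φₑ(0)`.
-/

open Nat.Partrec Nat.Partrec.Code Encodable Denumerable Relation

theorem ComputablePred.rePred_exists {α β : Type*} [Primcodable α] [Denumerable β]
    {q : α × β → Prop} (hq : ComputablePred q) : REPred fun a => ∃ b, q (a, b) := by
  obtain ⟨_, hq⟩ := hq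
  have hsearch : Partrec fun a =>
      Nat.rfind (fun n => Part.some (decide (q (a, ofNat β n))) : ℕ →. Bool) :=
    Partrec.rfind
      (hq.comp (Computable.fst.pair ((Computable.ofNat β).comp Computable.snd))).partrec.to₂
  refine hsearch.dom_re.of_eq fun a => Nat.rfind_dom.trans ?_
  simp only [Part.mem_some_iff, Part.some_dom, implies_true, and_true, eq_comm (a := true),
    decide_eq_true_eq]
  exact ⟨fun ⟨n, h⟩ => ⟨_, h⟩, fun ⟨b, h⟩ => ⟨encode b, by rwa [ofNat_encode]⟩⟩

namespace Relation

variable {α : Type*} {r : α → α → Prop}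

theorem equivalence_join_reflTransGen_of_rightUnique (hr : Relator.RightUnique r) :
    Equivalence (Join (ReflTransGen r)) :=
  equivalence_join_reflTransGen fun _ _ c hab hac => ⟨c, hr hab hac ▸ .refl, .refl⟩

theorem eq_of_join_reflTransGen_of_terminal {a b : α} (ha : ∀ x, ¬r a x) (hb : ∀ x, ¬r b x)
    (h : Join (ReflTransGen r) a b) : a = b := by
  have eq_of_terminal {a c : α} (ha : ∀ x, ¬r a x) (h : ReflTransGen r a c) : c = a := by
    rcases h.cases_head with rfl | ⟨x, hax, -⟩
    · rfl
    · exact absurd hax (ha x)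
  obtain ⟨c, hac, hbc⟩ := h
  rw [← eq_of_terminal ha hac, eq_of_terminal hb hbc]

variable {g : ℕ → α → Option α}

theorem iterate_bind_mono (hmono : ∀ ⦃s s' a b⦄, s ≤ s' → g s a = some b → g s' a = some b)
    {s s' k : ℕ} (hs : s ≤ s') {a c : α} (h : (Option.bind · (g s))^[k] (some a) = some c) :
    (Option.bind · (g s'))^[k] (some a) = some c := by
  induction k generalizing c with
  | zero => exact h
  | succ k ih =>
    rw [Function.iterate_succ_apply', Option.bind_eq_some_iff] at h ⊢
    obtain ⟨b, hb, hbc⟩ := h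
    exact ⟨b, ih hb, hmono hs hbc⟩

theorem reflTransGen_iff_exists_iterate_bind (hr : ∀ a b, r a b ↔ ∃ s, g s a = some b)
    (hmono : ∀ ⦃s s' a b⦄, s ≤ s' → g s a = some b → g s' a = some b) {a c : α} :
    ReflTransGen r a c ↔ ∃ s k, (Option.bind · (g s))^[k] (some a) = some c := by
  constructor
  · intro h
    induction h with
    | refl => exact ⟨0, 0, rfl⟩
    | tail _ hbc ih =>
      obtain ⟨s, k, hk⟩ := ih
      obtain ⟨s', hs'⟩ := (hr _ _).1 hbc
      refine ⟨max s s', k + 1, ?_⟩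
      rw [Function.iterate_succ_apply', iterate_bind_mono hmono (le_max_left s s') hk]
      exact hmono (le_max_right s s') hs'
  · rintro ⟨s, k, hk⟩
    induction k generalizing c with
    | zero => exact Option.some_inj.1 hk ▸ .refl
    | succ k ih =>
      rw [Function.iterate_succ_apply', Option.bind_eq_some_iff] at hk
      obtain ⟨b, hb, hbc⟩ := hk
      exact (ih hb).tail ((hr b c).2 ⟨s, hbc⟩)

end Relation

theorem apply_eq_apply_zero_of_invariant {R : ℕ → ℕ → Prop}
    (hfix : ∀ g : ℕ → ℕ, Computable g → ∃ n, R n (g n)) {f : ℕ → ℕ} (hf : Computable f)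
    (hinv : ∀ n m, R n m → f n = f m) (n : ℕ) : f n = f 0 := by
  by_contra hne
  let g x := if f x = f 0 then n else 0
  have hg : Computable g :=
    (Computable.cond (Primrec.eq.decide.to_comp.comp hf (Computable.const (f 0)))
      (Computable.const n) (Computable.const 0)).of_eq fun x => by simp [g, Bool.cond_decide]
  obtain ⟨x, hx⟩ := hfix g hg
  have hfx := hinv _ _ hx
  by_cases hx0 : f x = f 0
  · rw [show g x = n from if_pos hx0] at hfx
    exact hne (hfx ▸ hx0)
  · rw [show g x = 0 from if_neg hx0] at hfx
    exact hx0 hfx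

def collapse (n : ℕ) : Part ℕ :=
  if n % 2 = 1 then eval (ofNat Code (n / 2)) 0 else Part.none

def collapseApprox (s n : ℕ) : Option ℕ :=
  if n % 2 = 1 then evaln s (ofNat Code (n / 2)) 0 else none

def collapseIter (s k n : ℕ) : Option ℕ :=
  (Option.bind · (collapseApprox s))^[k] (some n)

def CollapseRel : ℕ → ℕ → Prop :=
  Join (ReflTransGen fun n m => m ∈ collapse n)

theorem collapse_two_mul_encode_add_one (c : Code) : collapse (2 * encode c + 1) = eval c 0 := by
  rw [collapse, if_pos (by omega), show (2 * encode c + 1) / 2 = encode c by omega, ofNat_encode]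

theorem collapse_two_mul (i : ℕ) : collapse (2 * i) = Part.none :=
  if_neg (by omega)

theorem mem_collapse_iff {n m : ℕ} : m ∈ collapse n ↔ ∃ s, collapseApprox s n = some m := by
  unfold collapse collapseApprox
  split_ifs
  · exact evaln_complete
  · simp

theorem collapseApprox_mono {s s' n m : ℕ} (hs : s ≤ s') (h : collapseApprox s n = some m) :
    collapseApprox s' n = some m := by
  unfold collapseApprox at h ⊢
  split_ifs at h ⊢
  exact evaln_mono hs h

theorem primrec₂_collapseApprox : Primrec₂ collapseApprox := by
  have hcode : Primrec fun p : ℕ × ℕ => ofNat Code (p.2 / 2) :=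
    (Primrec.ofNat Code).comp (Primrec.nat_div.comp Primrec.snd (Primrec.const 2))
  have hodd : PrimrecPred fun p : ℕ × ℕ => p.2 % 2 = 1 :=
    Primrec.eq.comp (Primrec.nat_mod.comp Primrec.snd (Primrec.const 2)) (Primrec.const 1)
  exact Primrec.ite hodd
    (primrec_evaln.comp ((Primrec.fst.pair hcode).pair (Primrec.const 0))) (Primrec.const none)

theorem collapseRel_equivalence : Equivalence CollapseRel :=
  equivalence_join_reflTransGen_of_rightUnique fun _ _ _ => Part.mem_unique

theorem not_collapseRel_two_mul {i j : ℕ} (h : i ≠ j) : ¬CollapseRel (2 * i) (2 * j) := by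
  intro hR
  have := eq_of_join_reflTransGen_of_terminal (by simp [collapse_two_mul])
    (by simp [collapse_two_mul]) hR
  omega

theorem reflTransGen_collapse_iff {a c : ℕ} :
    ReflTransGen (fun n m => m ∈ collapse n) a c ↔ ∃ s k, collapseIter s k a = some c :=
  reflTransGen_iff_exists_iterate_bind (fun n m => @mem_collapse_iff n m) @collapseApprox_mono

theorem primrec_collapseIter : Primrec fun p : (ℕ × ℕ) × ℕ => collapseIter p.1.1 p.1.2 p.2 := by
  have hstep : Primrec₂ fun (p : (ℕ × ℕ) × ℕ) (o : Option ℕ) => o.bind (collapseApprox p.1.1) :=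
    Primrec.option_bind Primrec.snd
      (primrec₂_collapseApprox.comp
        (Primrec.fst.comp (Primrec.fst.comp (Primrec.fst.comp Primrec.fst))) Primrec.snd)
  exact (Primrec.nat_iterate (Primrec.snd.comp Primrec.fst)
    (Primrec.option_some.comp Primrec.snd) hstep).of_eq fun _ => rfl

theorem rePred_collapseRel : REPred fun p : ℕ × ℕ => CollapseRel p.1 p.2 := by
  let q (x : (ℕ × ℕ) × ℕ × (ℕ × ℕ) × (ℕ × ℕ)) : Prop :=
    collapseIter x.2.2.1.1 x.2.2.1.2 x.1.1 = some x.2.1 ∧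
      collapseIter x.2.2.2.1 x.2.2.2.2 x.1.2 = some x.2.1
  have hq : ComputablePred q := by
    open Primrec in
    exact PrimrecPred.computablePred <| PrimrecPred.and
      (Primrec.eq.comp (primrec_collapseIter.comp ((fst.comp (snd.comp snd)).pair (fst.comp fst)))
        (option_some.comp (fst.comp snd)))
      (Primrec.eq.comp (primrec_collapseIter.comp ((snd.comp (snd.comp snd)).pair (snd.comp fst)))
        (option_some.comp (fst.comp snd)))
  refine (ComputablePred.rePred_exists hq).of_eq fun p => ?_
  simp only [q, CollapseRel, Join, reflTransGen_collapse_iff]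
  constructor
  · rintro ⟨⟨c, ⟨s, k⟩, ⟨s', l⟩⟩, hk, hl⟩
    exact ⟨c, ⟨s, k, hk⟩, ⟨s', l, hl⟩⟩
  · rintro ⟨c, ⟨s, k, hk⟩, ⟨s', l, hl⟩⟩
    exact ⟨(c, (s, k), (s', l)), hk, hl⟩

theorem exists_collapseRel_apply_self {g : ℕ → ℕ} (hg : Computable g) :
    ∃ n, CollapseRel n (g n) := by
  have hpt : Computable fun c : Code => 2 * encode c + 1 :=
    (Primrec.succ.comp (Primrec.nat_mul.comp (Primrec.const 2) Primrec.encode)).to_comp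
  obtain ⟨c, hc⟩ := fixed_point₂ (f := fun c _ => Part.some (g (2 * encode c + 1)))
    ((hg.comp hpt).comp Computable.fst).partrec
  refine ⟨2 * encode c + 1, _, .single ?_, .refl⟩
  rw [collapse_two_mul_encode_add_one, hc]
  exact Part.mem_some _

/-- There exists a computably enumerable equivalence relation `R` on `ℕ` with infinitely
many equivalence classes such that every computable `R`-invariant function `f : ℕ → ℕ`
is constant. -/
theorem exists_ceer_infinite_no_nonconstant_invariant_computable :
    ∃ R : ℕ → ℕ → Prop,
      Equivalence R ∧
      REPred (fun p : ℕ × ℕ => R p.1 p.2) ∧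
      (∃ h : ℕ → ℕ, ∀ i j : ℕ, i ≠ j → ¬ R (h i) (h j)) ∧
      (∀ f : ℕ → ℕ, Computable f → (∀ n m : ℕ, R n m → f n = f m) →
        ∃ c : ℕ, ∀ n : ℕ, f n = c) :=
  ⟨CollapseRel, collapseRel_equivalence, rePred_collapseRel,
    ⟨(2 * ·), fun _ _ => not_collapseRel_two_mul⟩,
    fun _ hf hinv => ⟨_, apply_eq_apply_zero_of_invariant
      (fun _ => exists_collapseRel_apply_self) hf hinv⟩⟩
end

section
/- Let R be a computably enumerable equivalence relation on ℕ. Then the following are equivalent: (1) for all a, b ∈ ℕ with ¬R a b, the equivalence classes {n | R n a} and {n | R n b} are recursively inseparable, i.e., there is no computable function C : ℕ → Bool with C n = true for all n with R n a and C n = false for all n with R n b; (2) for every computable function g : ℕ → Bool there exists a Boolean value v such that for every n ∈ ℕ there exists m with R n m and g m = v. -/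
/-! A boolean function `g` has no constant choice exactly when `g` is constantly `false` on one
class and constantly `true` on another, i.e. when `g` separates two classes. Both conditions
therefore say that no computable `g` separates two classes. -/

section SeparatesClasses

variable {α : Type*} {R : α → α → Prop}

def SeparatesClasses (R : α → α → Prop) (g : α → Bool) (a b : α) : Prop :=
  (∀ n, R n a → g n = true) ∧ (∀ n, R n b → g n = false)

theorem SeparatesClasses.not_rel (hR : ∀ x, R x x) {g : α → Bool} {a b : α}
    (hsep : SeparatesClasses R g a b) : ¬ R a b := fun hab => by
  simpa [hsep.1 a (hR a)] using hsep.2 a hab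

theorem exists_const_choice_iff_not_separatesClasses (hR : Equivalence R) (g : α → Bool) :
    (∃ v : Bool, ∀ n, ∃ m, R n m ∧ g m = v) ↔ ¬ ∃ a b, SeparatesClasses R g a b := by
  constructor
  · rintro ⟨v, hv⟩ ⟨a, b, hsep_a, hsep_b⟩
    obtain ⟨m, ham, rfl⟩ := hv a
    obtain ⟨m', hbm', hgm'⟩ := hv b
    simp [hsep_a m (hR.symm ham), hsep_b m' (hR.symm hbm')] at hgm'
  · intro hnsep
    by_contra! hmiss
    obtain ⟨b, hb⟩ := hmiss true
    obtain ⟨a, ha⟩ := hmiss false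
    exact hnsep ⟨a, b, fun n hn => by simpa using ha n (hR.symm hn),
      fun n hn => by simpa using hb n (hR.symm hn)⟩

end SeparatesClasses

theorem ceer_inseparable_iff_constant_choice_general
    (R : ℕ → ℕ → Prop) (hR : Equivalence R) :
    (∀ a b : ℕ, ¬ R a b →
        ¬ ∃ C : ℕ → Bool, Computable C ∧
            (∀ n : ℕ, R n a → C n = true) ∧ (∀ n : ℕ, R n b → C n = false)) ↔
    (∀ g : ℕ → Bool, Computable g →
        ∃ v : Bool, ∀ n : ℕ, ∃ m : ℕ, R n m ∧ g m = v) := by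
  constructor
  · intro hinsep g hg
    refine (exists_const_choice_iff_not_separatesClasses hR g).mpr ?_
    rintro ⟨a, b, hsep⟩
    exact hinsep a b (hsep.not_rel hR.refl) ⟨g, hg, hsep⟩
  · rintro hchoice a b - ⟨C, hC, hsep⟩
    exact (exists_const_choice_iff_not_separatesClasses hR C).mp (hchoice C hC) ⟨a, b, hsep⟩

/-- For a computably enumerable equivalence relation `R` on `ℕ`, the following are
equivalent: (1) any two distinct equivalence classes of `R` are recursively inseparable;
(2) for every computable `g : ℕ → Bool` there is a boolean `v` such that every
equivalence class contains a representative `m` with `g m = v`. -/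
theorem ceer_inseparable_iff_constant_choice
    (R : ℕ → ℕ → Prop) (hR : Equivalence R)
    (hce : REPred (fun p : ℕ × ℕ => R p.1 p.2)) :
    (∀ a b : ℕ, ¬ R a b →
        ¬ ∃ C : ℕ → Bool, Computable C ∧
            (∀ n : ℕ, R n a → C n = true) ∧ (∀ n : ℕ, R n b → C n = false)) ↔
    (∀ g : ℕ → Bool, Computable g →
        ∃ v : Bool, ∀ n : ℕ, ∃ m : ℕ, R n m ∧ g m = v) :=
  ceer_inseparable_iff_constant_choice_general R hR
end

section
/- Let R be a computably enumerable equivalence relation on ℕ with infinitely many equivalence classes (i.e., there is a function h : ℕ → ℕ such that ¬R (h i) (h j) whenever i ≠ j). Then the following are equivalent: (i) the predicate (n,m) ↦ R n m is computable (decidable); (ii) the complement predicate (n,m) ↦ ¬R n m is computably enumerable; (iii) there exists a computable function f : ℕ → ℕ such that for all n, m: R n m if and only if f n = f m; (iv) there exist computable functions f, g : ℕ → ℕ such that for all n, m: R n m if and only if f n = f m, and f (g k) = k for all k ∈ ℕ. -/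
/-!
A decidable equivalence relation on `ℕ` is classified by the map sending `n` to the least
element of its class. When there are infinitely many classes, numbering these least
representatives in increasing order (`Nat.count`) makes the classifier surjective, with
`Nat.nth` as a computable section. Conversely a computable classifier decides the relation,
and a c.e. relation is decidable exactly when its complement is c.e.
-/

open Computable

theorem ComputablePred.computable_count {p : ℕ → Prop} [DecidablePred p]
    (hp : ComputablePred p) : Computable (Nat.count p) := by
  have hstep : Computable₂ fun (_ : ℕ) (q : ℕ × ℕ) => q.2 + if p q.1 then 1 else 0 := by
    refine Computable₂.mk (Primrec.nat_add.to_comp.comp (snd.comp snd) ?_)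
    simpa [Bool.cond_decide] using (hp.decide.comp (fst.comp snd)).cond (const 1) (const 0)
  refine (Computable.nat_rec .id (const 0) hstep).of_eq fun n => ?_
  induction n with
  | zero => rfl
  | succ n ih => simp [Nat.count_succ, ← ih]

theorem ComputablePred.computable_nth {p : ℕ → Prop} [DecidablePred p]
    (hp : ComputablePred p) (hinf : (Set.ofPred p).Infinite) : Computable (Nat.nth p) := by
  have hex : ∀ k, ∃ n, p n ∧ Nat.count p n = k := fun k =>
    ⟨Nat.nth p k, Nat.nth_mem_of_infinite hinf k, Nat.count_nth_of_infinite hinf k⟩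
  have hdec : ComputablePred fun x : ℕ × ℕ => p x.2 ∧ Nat.count p x.2 = x.1 :=
    Computable.computablePred <| (Primrec.and.to_comp.comp (hp.decide.comp snd)
      (Primrec.eq.decide.to_comp.comp (hp.computable_count.comp snd) fst)).of_eq
        fun x => by simp
  refine (Computable.find hdec hex).of_eq fun k => ?_
  obtain ⟨hpn, hcount⟩ := Nat.find_spec (hex k)
  simpa only [hcount] using (Nat.nth_count hpn).symm

namespace Equivalence

section LeastRep

variable {r : ℕ → ℕ → Prop} [DecidableRel r] (hr : Equivalence r)

def leastRep (n : ℕ) : ℕ := Nat.find ⟨n, hr.refl n⟩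

theorem rel_leastRep (n : ℕ) : r n (hr.leastRep n) := Nat.find_spec ⟨n, hr.refl n⟩

theorem leastRep_le_of_rel {n k : ℕ} (h : r n k) : hr.leastRep n ≤ k := Nat.find_min' _ h

theorem leastRep_eq_leastRep_iff {n m : ℕ} : hr.leastRep n = hr.leastRep m ↔ r n m := by
  refine ⟨fun h => hr.trans (hr.rel_leastRep n) (h ▸ hr.symm (hr.rel_leastRep m)), fun h => ?_⟩
  exact le_antisymm (hr.leastRep_le_of_rel (hr.trans h (hr.rel_leastRep m)))
    (hr.leastRep_le_of_rel (hr.trans (hr.symm h) (hr.rel_leastRep n)))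

theorem leastRep_leastRep (n : ℕ) : hr.leastRep (hr.leastRep n) = hr.leastRep n :=
  (hr.leastRep_eq_leastRep_iff).2 (hr.symm (hr.rel_leastRep n))

theorem computable_leastRep (hc : ComputablePred fun x : ℕ × ℕ => r x.1 x.2) :
    Computable hr.leastRep :=
  Computable.find hc _

theorem infinite_setOf_leastRep_eq {h : ℕ → ℕ} (hh : Pairwise fun i j => ¬ r (h i) (h j)) :
    {n | hr.leastRep n = n}.Infinite :=
  Set.infinite_of_injective_forall_mem
    (f := fun i => hr.leastRep (h i))
    (fun _ _ hij => by_contra fun hne => hh hne ((hr.leastRep_eq_leastRep_iff).1 hij))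
    (fun i => hr.leastRep_leastRep (h i))

end LeastRep

theorem exists_computable_surjective_classifier {r : ℕ → ℕ → Prop} [DecidableRel r]
    (hr : Equivalence r) (hc : ComputablePred fun x : ℕ × ℕ => r x.1 x.2)
    {h : ℕ → ℕ} (hh : Pairwise fun i j => ¬ r (h i) (h j)) :
    ∃ f g : ℕ → ℕ, Computable f ∧ Computable g ∧
      (∀ n m, r n m ↔ f n = f m) ∧ ∀ k, f (g k) = k := by
  set p : ℕ → Prop := fun n => hr.leastRep n = n
  have hF := hr.computable_leastRep hc
  have hp : ComputablePred p :=
    Computable.computablePred (Primrec.eq.decide.to_comp.comp hF .id)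
  have hinf : (Set.ofPred p).Infinite := hr.infinite_setOf_leastRep_eq hh
  refine ⟨fun n => Nat.count p (hr.leastRep n), Nat.nth p, hp.computable_count.comp hF,
    hp.computable_nth hinf, fun n m => ?_, fun k => ?_⟩
  · rw [← hr.leastRep_eq_leastRep_iff]
    exact ⟨congrArg _, Nat.count_injective (hr.leastRep_leastRep n) (hr.leastRep_leastRep m)⟩
  · have hfix : hr.leastRep (Nat.nth p k) = Nat.nth p k := Nat.nth_mem_of_infinite hinf k
    simp only [hfix, Nat.count_nth_of_infinite hinf]

end Equivalence

/-- For a computably enumerable equivalence relation `R` on `ℕ` with infinitely many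
equivalence classes, the following are equivalent: (i) `R` is decidable (computable);
(ii) the complement of `R` is computably enumerable; (iii) there is a computable
`f : ℕ → ℕ` classifying `R` (i.e. `R n m ↔ f n = f m`); (iv) there are computable
`f g : ℕ → ℕ` with `R n m ↔ f n = f m` and `f (g k) = k` for all `k`. -/
theorem ceer_infinite_decidable_tfae
    (R : ℕ → ℕ → Prop) (hR : Equivalence R)
    (hce : REPred (fun p : ℕ × ℕ => R p.1 p.2))
    (hinf : ∃ h : ℕ → ℕ, ∀ i j : ℕ, i ≠ j → ¬ R (h i) (h j)) :
    [ ComputablePred (fun p : ℕ × ℕ => R p.1 p.2),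
      REPred (fun p : ℕ × ℕ => ¬ R p.1 p.2),
      (∃ f : ℕ → ℕ, Computable f ∧ ∀ n m : ℕ, R n m ↔ f n = f m),
      (∃ f g : ℕ → ℕ, Computable f ∧ Computable g ∧
        (∀ n m : ℕ, R n m ↔ f n = f m) ∧ ∀ k : ℕ, f (g k) = k) ].TFAE := by
  classical
  obtain ⟨h, hh⟩ := hinf
  tfae_have 1 → 2 := fun hc => hc.not.to_re
  tfae_have 2 → 1 := fun hco => ComputablePred.computable_iff_re_compl_re'.2 ⟨hce, hco⟩
  tfae_have 1 → 4 := fun hc => hR.exists_computable_surjective_classifier hc hh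
  tfae_have 4 → 3 := fun ⟨f, _, hf, _, hRf, _⟩ => ⟨f, hf, hRf⟩
  tfae_have 3 → 1 := fun ⟨f, hf, hRf⟩ =>
    Computable.computablePred <|
      (Primrec.eq.decide.to_comp.comp (hf.comp fst) (hf.comp snd)).of_eq fun x => by simp [hRf]
  tfae_finish
end

section
/- Let V be a type and let E : V → V → Prop be a directed graph in which every vertex has at most one out-neighbour, i.e., for all a, b, c, if E a b and E a c then b = c. If a and b are distinct vertices that both have no out-neighbour (¬E a c and ¬E b c for all c), then a and b are not related by the equivalence relation generated by the symmetric closure of E; that is, ¬ EqvGen (fun x y => E x y ∨ E y x) a b. -/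
lemma rtg_comparable {V : Type*} {E : V → V → Prop}
    (hfun : ∀ a b c : V, E a b → E a c → b = c) :
    ∀ {y z₁ z₂ : V}, Relation.ReflTransGen E y z₁ → Relation.ReflTransGen E y z₂ →
      Relation.ReflTransGen E z₁ z₂ ∨ Relation.ReflTransGen E z₂ z₁ := by
  intro y z₁ z₂ h1
  induction h1 using Relation.ReflTransGen.head_induction_on with
  | refl => intro h2; exact Or.inl h2
  | head hyc hcz ih =>
    rename_i y c
    intro h2
    rcases Relation.ReflTransGen.cases_head h2 with rfl | ⟨d, hyd, hdz⟩
    · exact Or.inr (Relation.ReflTransGen.head hyc hcz)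
    · exact ih (by rwa [hfun _ _ _ hyd hyc] at hdz)

lemma eqvgen_common {V : Type*} {E : V → V → Prop}
    (hfun : ∀ a b c : V, E a b → E a c → b = c) {x y : V}
    (h : Relation.EqvGen (fun x y => E x y ∨ E y x) x y) :
    ∃ z, Relation.ReflTransGen E x z ∧ Relation.ReflTransGen E y z := by
  induction h with
  | rel x y h =>
    rcases h with h | h
    · exact ⟨y, Relation.ReflTransGen.single h, .refl⟩
    · exact ⟨x, .refl, Relation.ReflTransGen.single h⟩
  | refl x => exact ⟨x, .refl, .refl⟩
  | symm _ _ _ ih => obtain ⟨z, h1, h2⟩ := ih; exact ⟨z, h2, h1⟩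
  | trans x y w _ _ ih1 ih2 =>
    obtain ⟨z₁, hx, hy1⟩ := ih1
    obtain ⟨z₂, hy2, hw⟩ := ih2
    rcases rtg_comparable hfun hy1 hy2 with h | h
    · exact ⟨z₂, hx.trans h, hw⟩
    · exact ⟨z₁, hx, hw.trans h⟩

/-- In a directed graph where every vertex has out-degree at most one, two distinct
vertices with out-degree zero are not related by the equivalence relation generated by
the symmetric closure of the edge relation. -/
theorem outdeg_zero_not_weakly_connected
    {V : Type*} (E : V → V → Prop)
    (hfun : ∀ a b c : V, E a b → E a c → b = c)
    (a b : V) (hab : a ≠ b)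
    (ha : ∀ c : V, ¬ E a c) (hb : ∀ c : V, ¬ E b c) :
    ¬ Relation.EqvGen (fun x y => E x y ∨ E y x) a b := by
  intro h
  obtain ⟨z, h1, h2⟩ := eqvgen_common hfun h
  rcases Relation.ReflTransGen.cases_head h1 with rfl | ⟨c, hc, -⟩
  · rcases Relation.ReflTransGen.cases_head h2 with h | ⟨c, hc, -⟩
    · exact hab h.symm
    · exact hb _ hc
  · exact ha _ hc
end

section
/- There exists a set A ⊆ ℕ that is infinite and co-infinite with the following property. Call a sequence p : ℕ → Bool an A-name if {n | p n = true} ⊆ A and A \ {n | p n = true} is finite, and call p a coA-name if {n | p n = true} ⊆ ℕ \ A and (ℕ \ A) \ {n | p n = true} is finite. Then there is NO computably enumerable set W of pairs (w, u) of finite Boolean strings satisfying both: (soundness) for every (w, u) ∈ W and all sequences p, q : ℕ → Bool with w a prefix of p and u a prefix of q, it is not the case that p and q are both A-names, and not the case that p and q are both coA-names; and (completeness) for all sequences p, q : ℕ → Bool such that one of them is an A-name and the other is a coA-name, there exists (w, u) ∈ W with w a prefix of p and u a prefix of q. -/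
/-- A finite boolean string `w` is a prefix of the sequence `p : ℕ → Bool`. -/
def IsBoolPrefix (w : List Bool) (p : ℕ → Bool) : Prop :=
  ∀ i : ℕ, ∀ h : i < w.length, p i = w.get ⟨i, h⟩

/-- `p` is a name of the point `a` of `D_A`: it is obtained from the characteristic
function of `A` by turning finitely many `1`s into `0`s. -/
def IsAName (A : Set ℕ) (p : ℕ → Bool) : Prop :=
  {n : ℕ | p n = true} ⊆ A ∧ (A \ {n : ℕ | p n = true}).Finite

/-- `p` is a name of the point `b` of `D_A`: it is obtained from the characteristic
function of `ℕ \ A` by turning finitely many `1`s into `0`s. -/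
def IsCoAName (A : Set ℕ) (p : ℕ → Bool) : Prop :=
  {n : ℕ | p n = true} ⊆ Aᶜ ∧ (Aᶜ \ {n : ℕ | p n = true}).Finite

/-!
Only countably many sets `W` are computably enumerable, so it suffices to defeat countably many
candidates one at a time, building `A` block by block. Against `W`, with `A` already fixed below
`N`: if `W` contains a pair `(w, u)` with no `true` below `N`, put the `true` positions of `w` and
`u` into `A`; then both strings extend to `A`-names and soundness fails. Otherwise completeness
fails on the `A`-name and the `coA`-name that vanish below `N`, whatever `A` is.
-/

open Set

theorem countable_setOf_rePred (α : Type*) [Primcodable α] :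
    {s : Set α | REPred (· ∈ s)}.Countable := by
  refine (countable_range fun c : Nat.Partrec.Code =>
    {a : α | (c.eval (Encodable.encode a)).Dom}).mono fun s hs => ?_
  obtain ⟨c, hc⟩ := Nat.Partrec.Code.exists_code.1 hs
  refine ⟨c, ext fun a => ?_⟩
  simp [hc, Part.assert]

def trueIndices (w : List Bool) : Set ℕ := {i | w.getD i false = true}

lemma mem_trueIndices {w : List Bool} {i : ℕ} : i ∈ trueIndices w ↔ w.getD i false = true :=
  Iff.rfl

lemma lt_length_of_mem_trueIndices {w : List Bool} {i : ℕ} (h : i ∈ trueIndices w) :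
    i < w.length := by
  by_contra! hi
  rw [mem_trueIndices, List.getD_eq_default _ _ hi] at h
  exact Bool.false_ne_true h

lemma IsBoolPrefix.apply_eq_true {w : List Bool} {p : ℕ → Bool} (hp : IsBoolPrefix w p)
    {i : ℕ} (hi : i ∈ trueIndices w) : p i = true := by
  have hlt := lt_length_of_mem_trueIndices hi
  rw [mem_trueIndices, List.getD_eq_getElem _ _ hlt] at hi
  rw [hp i hlt, List.get_eq_getElem, hi]

lemma isAName_of_forall_le {A : Set ℕ} {p : ℕ → Bool} (hp : {n | p n = true} ⊆ A) (N : ℕ)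
    (hN : ∀ n ∈ A, N ≤ n → p n = true) : IsAName A p :=
  ⟨hp, (finite_Iio N).subset fun n ⟨hnA, hnp⟩ => not_le.mp fun hn => hnp (hN n hnA hn)⟩

lemma exists_isAName_forall_lt (A : Set ℕ) (N : ℕ) :
    ∃ p : ℕ → Bool, IsAName A p ∧ ∀ n < N, p n = false := by
  classical
  refine ⟨fun n => decide (N ≤ n ∧ n ∈ A), isAName_of_forall_le ?_ N ?_, ?_⟩
  · intro n hn
    simp_all
  · intro n hnA hn
    simp [hn, hnA]
  · intro n hn
    simp [hn]

lemma exists_isBoolPrefix_isAName {A : Set ℕ} {w : List Bool} (hw : trueIndices w ⊆ A) :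
    ∃ p : ℕ → Bool, IsBoolPrefix w p ∧ IsAName A p := by
  classical
  refine ⟨fun n => if n < w.length then w.getD n false else decide (n ∈ A), fun i hi => ?_,
    isAName_of_forall_le (fun n hn => ?_) w.length fun n hnA hn => ?_⟩
  · simp [hi]
  · by_cases hn' : n < w.length
    · exact hw (by rw [mem_trueIndices, List.getD_eq_getElem _ _ hn']; simpa [hn'] using hn)
    · simpa [hn'] using hn
  · simp [not_lt.mpr hn, hnA]

def IsHausdorffWitness (A : Set ℕ) (W : Set (List Bool × List Bool)) : Prop :=
  (∀ wu ∈ W, ∀ p q : ℕ → Bool, IsBoolPrefix wu.1 p → IsBoolPrefix wu.2 q →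
    ¬ (IsAName A p ∧ IsAName A q) ∧ ¬ (IsCoAName A p ∧ IsCoAName A q)) ∧
  (∀ p q : ℕ → Bool, (IsAName A p ∧ IsCoAName A q) ∨ (IsCoAName A p ∧ IsAName A q) →
    ∃ wu ∈ W, IsBoolPrefix wu.1 p ∧ IsBoolPrefix wu.2 q)

namespace IsHausdorffWitness

variable {A : Set ℕ} {W : Set (List Bool × List Bool)}

lemma not_subset_of_mem (h : IsHausdorffWitness A W) {w u : List Bool} (hwu : (w, u) ∈ W) :
    ¬ (trueIndices w ⊆ A ∧ trueIndices u ⊆ A) := by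
  rintro ⟨hw, hu⟩
  obtain ⟨p, hwp, hp⟩ := exists_isBoolPrefix_isAName hw
  obtain ⟨q, huq, hq⟩ := exists_isBoolPrefix_isAName hu
  exact (h.1 _ hwu p q hwp huq).1 ⟨hp, hq⟩

lemma exists_mem_subset_Ici (h : IsHausdorffWitness A W) (N : ℕ) :
    ∃ w u, (w, u) ∈ W ∧ trueIndices w ⊆ Ici N ∧ trueIndices u ⊆ Ici N := by
  obtain ⟨p, hp, hpN⟩ := exists_isAName_forall_lt A N
  obtain ⟨q, hq, hqN⟩ := exists_isAName_forall_lt Aᶜ N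
  obtain ⟨wu, hwu, hwp, huq⟩ := h.2 p q (Or.inl ⟨hp, hq⟩)
  have subset_Ici {w : List Bool} {r : ℕ → Bool} (hwr : IsBoolPrefix w r)
      (hr : ∀ n < N, r n = false) : trueIndices w ⊆ Ici N := fun i hi =>
    mem_Ici.mpr <| not_lt.mp fun hiN => by simpa [hr i hiN] using hwr.apply_eq_true hi
  exact ⟨wu.1, wu.2, hwu, subset_Ici hwp hpN, subset_Ici huq hqN⟩

end IsHausdorffWitness

lemma exists_block_not_isHausdorffWitness (W : Set (List Bool × List Bool)) (N : ℕ) :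
    ∃ M, ∃ S : Set ℕ, (∃ n ∈ S, n ∈ Ico N M) ∧ (∃ n ∉ S, n ∈ Ico N M) ∧
      ∀ A : Set ℕ, (∀ n ∈ Ico N M, n ∈ A ↔ n ∈ S) → ¬ IsHausdorffWitness A W := by
  by_cases hW : ∃ w u, (w, u) ∈ W ∧ trueIndices w ⊆ Ici N ∧ trueIndices u ⊆ Ici N
  · obtain ⟨w, u, hwu, hw, hu⟩ := hW
    -- `K` lies beyond `w` and `u`, so the block meets both `A` (at `K`) and `Aᶜ` (at `K + 1`).
    set K := N + w.length + u.length
    set S := trueIndices w ∪ trueIndices u ∪ {K}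
    have subset_of_agree {A : Set ℕ} (hA : ∀ n ∈ Ico N (K + 2), n ∈ A ↔ n ∈ S) {v : List Bool}
        (hvN : trueIndices v ⊆ Ici N) (hvK : v.length ≤ K)
        (hvS : trueIndices v ⊆ trueIndices w ∪ trueIndices u) : trueIndices v ⊆ A := fun i hi =>
      (hA i ⟨hvN hi, by have := lt_length_of_mem_trueIndices hi; omega⟩).2 (Or.inl (hvS hi))
    refine ⟨K + 2, S, ⟨K, by simp [S], by simp; omega⟩, ⟨K + 1, ?_, by simp; omega⟩,
      fun A hA hWA => hWA.not_subset_of_mem hwu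
        ⟨subset_of_agree hA hw (by omega) subset_union_left,
          subset_of_agree hA hu (by omega) subset_union_right⟩⟩
    rintro ((hK | hK) | hK)
    · have := lt_length_of_mem_trueIndices hK; omega
    · have := lt_length_of_mem_trueIndices hK; omega
    · simp at hK
  · -- Completeness already fails, for every `A`.
    exact ⟨N + 2, {N}, ⟨N, rfl, by simp⟩, ⟨N + 1, by simp, by simp⟩,
      fun A _ hWA => hW (hWA.exists_mem_subset_Ici N)⟩

def blockStart (M : ℕ → ℕ → ℕ) : ℕ → ℕ
  | 0 => 0
  | e + 1 => M e (blockStart M e)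

lemma strictMono_blockStart {M : ℕ → ℕ → ℕ} (hM : ∀ e N, N < M e N) :
    StrictMono (blockStart M) :=
  strictMono_nat_of_lt_succ fun e => hM e _

lemma eq_of_mem_Ico_blockStart {M : ℕ → ℕ → ℕ} (hM : ∀ e N, N < M e N) {e e' n : ℕ}
    (h : n ∈ Ico (blockStart M e) (blockStart M (e + 1)))
    (h' : n ∈ Ico (blockStart M e') (blockStart M (e' + 1))) : e = e' := by
  have hmono := (strictMono_blockStart hM).monotone
  by_contra hne
  rcases Nat.lt_or_gt_of_ne hne with hlt | hlt
  · exact (h.2.trans_le (hmono hlt)).not_ge h'.1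
  · exact (h'.2.trans_le (hmono hlt)).not_ge h.1

theorem exists_infinite_compl_infinite_of_blocks (P : ℕ → Set ℕ → Prop)
    (h : ∀ e N, ∃ M, ∃ S : Set ℕ, (∃ n ∈ S, n ∈ Ico N M) ∧ (∃ n ∉ S, n ∈ Ico N M) ∧
      ∀ A : Set ℕ, (∀ n ∈ Ico N M, n ∈ A ↔ n ∈ S) → P e A) :
    ∃ A : Set ℕ, A.Infinite ∧ Aᶜ.Infinite ∧ ∀ e, P e A := by
  choose M S hin hout hP using h
  have hM : ∀ e N, N < M e N := fun e N =>
    let ⟨_, _, hn⟩ := hin e N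
    hn.1.trans_lt hn.2
  set b := blockStart M
  set A := {n | ∃ e, n ∈ Ico (b e) (b (e + 1)) ∧ n ∈ S e (b e)}
  have hA (e : ℕ) : ∀ n ∈ Ico (b e) (b (e + 1)), n ∈ A ↔ n ∈ S e (b e) := fun n hn =>
    ⟨fun ⟨e', hn', hS⟩ => eq_of_mem_Ico_blockStart hM hn' hn ▸ hS, fun hS => ⟨e, hn, hS⟩⟩
  have hb (a : ℕ) : a < b (a + 1) :=
    (Nat.lt_succ_self a).trans_le (strictMono_blockStart hM).le_apply
  refine ⟨A, infinite_of_forall_exists_gt fun a => ?_, infinite_of_forall_exists_gt fun a => ?_,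
    fun e => hP e _ A (hA e)⟩
  · obtain ⟨n, hnS, hn⟩ := hin (a + 1) (b (a + 1))
    exact ⟨n, (hA _ n hn).2 hnS, (hb a).trans_le hn.1⟩
  · obtain ⟨n, hnS, hn⟩ := hout (a + 1) (b (a + 1))
    exact ⟨n, fun hnA => hnS ((hA _ n hn).1 hnA), (hb a).trans_le hn.1⟩

theorem exists_forall_not_isHausdorffWitness {𝒲 : Set (Set (List Bool × List Bool))}
    (h𝒲 : 𝒲.Countable) :
    ∃ A : Set ℕ, A.Infinite ∧ Aᶜ.Infinite ∧ ∀ W ∈ 𝒲, ¬ IsHausdorffWitness A W := by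
  obtain ⟨f, hf⟩ := countable_iff_exists_subset_range.1 h𝒲
  obtain ⟨A, hA, hAc, hAf⟩ := exists_infinite_compl_infinite_of_blocks
    (fun e A => ¬ IsHausdorffWitness A (f e)) fun e => exists_block_not_isHausdorffWitness (f e)
  refine ⟨A, hA, hAc, fun W hW => ?_⟩
  obtain ⟨e, rfl⟩ := hf hW
  exact hAf e

/-- There is an infinite, co-infinite `A ⊆ ℕ` such that no computably enumerable set `W`
of pairs of finite boolean strings is both a sound and a complete witness of
Hausdorffness for the two-point space `D_A`. -/
theorem exists_DA_not_computably_hausdorff :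
    ∃ A : Set ℕ, A.Infinite ∧ Aᶜ.Infinite ∧
      ¬ ∃ W : Set (List Bool × List Bool),
        REPred (fun wu => wu ∈ W) ∧
        (∀ wu ∈ W, ∀ p q : ℕ → Bool,
          IsBoolPrefix wu.1 p → IsBoolPrefix wu.2 q →
            ¬ (IsAName A p ∧ IsAName A q) ∧ ¬ (IsCoAName A p ∧ IsCoAName A q)) ∧
        (∀ p q : ℕ → Bool,
          (IsAName A p ∧ IsCoAName A q) ∨ (IsCoAName A p ∧ IsAName A q) →
            ∃ wu ∈ W, IsBoolPrefix wu.1 p ∧ IsBoolPrefix wu.2 q) := by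
  obtain ⟨A, hA, hAc, hW⟩ := exists_forall_not_isHausdorffWitness (countable_setOf_rePred _)
  exact ⟨A, hA, hAc, fun ⟨W, hre, hsound, hcomplete⟩ => hW W hre ⟨hsound, hcomplete⟩⟩
end
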